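/- Let G ⊆ S_n and H ⊆ S_m be subgroups of symmetric groups, and let cpms(G,H) be the set of completely positive maps f : ℂ^{n×n} → ℂ^{m×m} such that the composite M ↦ H·(f(G·M)) equals f. With the Löwner order (f ⊑ g iff g − f is completely positive), cpms(G,H) is a bounded directed-complete partial order: the zero map is its minimum element, and every directed subset of cpms(G,H) that has an upper bound in cpms(G,H) has a least upper bound in cpms(G,H). -/

import Mathlib

/-!
For positive semidefinite `P`, a Löwner-directed set `D` of maps bounded by `b` gives a monotone
net `f P` of Hermitian matrices bounded by `b P`. Such a net converges: tested against any
`Q ⪰ 0`, the numbers `tr (f P * Q)` increase and are bounded, and positive semidefinite matrices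
span all matrices. By linearity the net `f` then converges pointwise everywhere. Its limit is the
least upper bound of `D` in `cpms G H`, because `cpms G H` and the Löwner intervals `{g | f ⊑ g}`
and `{g | g ⊑ u}` are closed for pointwise convergence.
-/

namespace QCPM
open scoped ComplexOrder

noncomputable section

/-- The permutation matrix `P_g` of a permutation `g` of `{0,…,n−1}`:
`P_g e_j = e_{g j}`. -/
def permMatrix (n : ℕ) (g : Equiv.Perm (Fin n)) : Matrix (Fin n) (Fin n) ℂ :=
  fun i j => if i = g j then 1 else 0

/-- The action `g · M := P_g M P_g⁻¹` of a permutation on `ℂ^{n×n}`. -/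
def permAct (n : ℕ) (g : Equiv.Perm (Fin n)) (M : Matrix (Fin n) (Fin n) ℂ) :
    Matrix (Fin n) (Fin n) ℂ :=
  permMatrix n g * M * (permMatrix n g)⁻¹

/-- The action `G · M := (1/#G) ∑_{g ∈ G} g · M` of a subgroup of `S_n` on `ℂ^{n×n}`. -/
def groupAct (n : ℕ) (G : Subgroup (Equiv.Perm (Fin n))) (M : Matrix (Fin n) (Fin n) ℂ) :
    Matrix (Fin n) (Fin n) ℂ :=
  (Nat.card G : ℂ)⁻¹ • ∑ᶠ g : G, permAct n (g : Equiv.Perm (Fin n)) M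

/-- `F ⊗ id_k`, via the lexicographic (Kronecker–product) identification
`ℂ^{n×n} ⊗ ℂ^{k×k} ≅ ℂ^{nk×nk}`. -/
def tensorId {n m : ℕ} (F : Matrix (Fin n) (Fin n) ℂ → Matrix (Fin m) (Fin m) ℂ) (k : ℕ)
    (M : Matrix (Fin (n * k)) (Fin (n * k)) ℂ) : Matrix (Fin (m * k)) (Fin (m * k)) ℂ :=
  fun r c =>
    F (fun a b => M (finProdFinEquiv (a, (finProdFinEquiv.symm r).2))
                    (finProdFinEquiv (b, (finProdFinEquiv.symm c).2)))
      (finProdFinEquiv.symm r).1 (finProdFinEquiv.symm c).1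

/-- A map `F : ℂ^{n×n} → ℂ^{m×m}` is completely positive if for every `k ≥ 1`,
`F ⊗ id_k` sends positive semidefinite matrices to positive semidefinite matrices. -/
def IsCompletelyPositive {n m : ℕ}
    (F : Matrix (Fin n) (Fin n) ℂ → Matrix (Fin m) (Fin m) ℂ) : Prop :=
  ∀ k : ℕ, 1 ≤ k → ∀ M : Matrix (Fin (n * k)) (Fin (n * k)) ℂ,
    M.PosSemidef → (tensorId F k M).PosSemidef

/-- The Löwner order on maps `ℂ^{n×n} → ℂ^{m×m}`: `f ⊑ g` iff `g − f` is completely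
positive. -/
def Loewner {n m : ℕ} (f g : Matrix (Fin n) (Fin n) ℂ → Matrix (Fin m) (Fin m) ℂ) : Prop :=
  IsCompletelyPositive (fun M => g M - f M)

/-- `cpms(G,H)`: completely positive (linear) maps invariant under the actions of the
subgroups `G ⊆ S_n` and `H ⊆ S_m`. -/
def cpms {n m : ℕ} (G : Subgroup (Equiv.Perm (Fin n))) (H : Subgroup (Equiv.Perm (Fin m))) :
    Set (Matrix (Fin n) (Fin n) ℂ → Matrix (Fin m) (Fin m) ℂ) :=
  {f | IsLinearMap ℂ f ∧ IsCompletelyPositive f ∧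
    (fun M => groupAct m H (f (groupAct n G M))) = f}

/-- Kronecker product of square matrices, with the lexicographic identification of
indices. -/
def kron {a b : ℕ} (A : Matrix (Fin a) (Fin a) ℂ) (B : Matrix (Fin b) (Fin b) ℂ) :
    Matrix (Fin (a * b)) (Fin (a * b)) ℂ :=
  fun r c => A (finProdFinEquiv.symm r).1 (finProdFinEquiv.symm c).1 *
             B (finProdFinEquiv.symm r).2 (finProdFinEquiv.symm c).2

/-- Componentwise action of a pair of subgroups `G ⊆ S_a`, `H ⊆ S_b` on `ℂ^{ab×ab}`:
`(G×H)·M := (1/(#G·#H)) ∑_{g∈G,h∈H} (P_g ⊗ P_h) M (P_g ⊗ P_h)⁻¹`. -/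
def pairAct {a b : ℕ} (G : Subgroup (Equiv.Perm (Fin a))) (H : Subgroup (Equiv.Perm (Fin b)))
    (M : Matrix (Fin (a * b)) (Fin (a * b)) ℂ) : Matrix (Fin (a * b)) (Fin (a * b)) ℂ :=
  ((Nat.card G : ℂ) * (Nat.card H : ℂ))⁻¹ •
    ∑ᶠ g : G, ∑ᶠ h : H,
      kron (permMatrix a (g : Equiv.Perm (Fin a))) (permMatrix b (h : Equiv.Perm (Fin b))) * M *
        (kron (permMatrix a (g : Equiv.Perm (Fin a))) (permMatrix b (h : Equiv.Perm (Fin b))))⁻¹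

/-- The commutation (swap) matrix `S ∈ ℂ^{ba×ab}` determined by `S (x ⊗ y) = y ⊗ x`
for `x ∈ ℂ^a`, `y ∈ ℂ^b`.  Its inverse is `swapMat b a`. -/
def swapMat (a b : ℕ) : Matrix (Fin (b * a)) (Fin (a * b)) ℂ :=
  fun r c => if finProdFinEquiv.symm c = Prod.swap (finProdFinEquiv.symm r) then 1 else 0

end
end QCPM

open scoped ComplexOrder
open Filter Topology Matrix

lemma Complex.exists_tendsto_of_monotone_of_le {ι : Type*} [Preorder ι] {t : ι → ℂ}
    (ht : Monotone t) {B : ℂ} (hB : ∀ i, t i ≤ B) : ∃ c, Tendsto t atTop (𝓝 c) := by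
  have hre : Tendsto (fun i => (t i).re) atTop (𝓝 (⨆ i, (t i).re)) :=
    tendsto_atTop_ciSup (fun i j hij => (Complex.le_def.mp (ht hij)).1)
      ⟨B.re, by rintro _ ⟨i, rfl⟩; exact (Complex.le_def.mp (hB i)).1⟩
  -- In `ComplexOrder`, `t i ≤ B` pins the imaginary part of `t i` to that of `B`.
  have ht_eq : t = fun i => ((t i).re : ℂ) + B.im * Complex.I := by
    funext i
    apply Complex.ext <;> simp [(Complex.le_def.mp (hB i)).2]
  rw [ht_eq]
  exact ⟨_, ((Complex.continuous_ofReal.tendsto _).comp hre).add_const _⟩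

lemma exists_tendsto_of_forall_mem_span {ι R V W : Type*} [Semiring R] [AddCommMonoid V]
    [Module R V] [AddCommMonoid W] [Module R W] [TopologicalSpace W] [ContinuousAdd W]
    [ContinuousConstSMul R W] (F : ι → V →ₗ[R] W) {l : Filter ι} {s : Set V}
    (hs : Submodule.span R s = ⊤) (h : ∀ v ∈ s, ∃ w, Tendsto (F · v) l (𝓝 w)) (v : V) :
    ∃ w, Tendsto (F · v) l (𝓝 w) := by
  have hv : v ∈ Submodule.span R s := hs ▸ Submodule.mem_top
  induction hv using Submodule.span_induction with
  | mem v hv => exact h v hv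
  | zero => exact ⟨0, by simpa using tendsto_const_nhds⟩
  | add v w _ _ hv hw =>
    obtain ⟨a, ha⟩ := hv
    obtain ⟨b, hb⟩ := hw
    exact ⟨a + b, by simpa using ha.add hb⟩
  | smul r v _ hv =>
    obtain ⟨a, ha⟩ := hv
    exact ⟨r • a, by simpa using ha.const_smul r⟩

namespace Matrix

variable {κ : Type*} [Fintype κ] [DecidableEq κ]

lemma span_setOf_posSemidef : Submodule.span ℂ {P : Matrix κ κ ℂ | P.PosSemidef} = ⊤ := by
  open scoped Matrix.Norms.L2Operator MatrixOrder in
  simpa only [nonneg_iff_posSemidef] using CStarAlgebra.span_nonneg (A := Matrix κ κ ℂ)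

lemma isClosed_setOf_posSemidef : IsClosed {P : Matrix κ κ ℂ | P.PosSemidef} := by
  open scoped Matrix.Norms.L2Operator MatrixOrder in
  simpa only [nonneg_iff_posSemidef] using CStarAlgebra.isClosed_nonneg (A := Matrix κ κ ℂ)

omit [DecidableEq κ] in
lemma PosSemidef.trace_mul_nonneg {A B : Matrix κ κ ℂ} (hA : A.PosSemidef)
    (hB : B.PosSemidef) : 0 ≤ (A * B).trace := by
  classical
  open scoped MatrixOrder in
  obtain ⟨C, rfl⟩ := CStarAlgebra.nonneg_iff_eq_star_mul_self.mp hB.nonneg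
  rw [← mul_assoc, trace_mul_cycle, star_eq_conjTranspose]
  exact (hA.mul_mul_conjTranspose_same C).trace_nonneg

open scoped MatrixOrder in
lemma exists_tendsto_of_monotone_of_le {ι : Type*} [Preorder ι] {A : ι → Matrix κ κ ℂ}
    (hA : Monotone A) {B : Matrix κ κ ℂ} (hB : ∀ i, A i ≤ B) :
    ∃ L, Tendsto A atTop (𝓝 L) := by
  -- Tested against `P ⪰ 0`, the scalars `tr (A i * P)` increase and are bounded by `tr (B * P)`.
  have htrace (N : Matrix κ κ ℂ) : ∃ c, Tendsto (fun i => (A i * N).trace) atTop (𝓝 c) := by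
    refine exists_tendsto_of_forall_mem_span (fun i => (traceLinearMap κ ℂ ℂ).comp
      (LinearMap.mulLeft ℂ (A i))) span_setOf_posSemidef (fun P hP => ?_) N
    refine Complex.exists_tendsto_of_monotone_of_le (B := (B * P).trace) (fun i j hij => ?_)
      fun i => ?_
    · simpa [sub_mul] using (le_iff.mp (hA hij)).trace_mul_nonneg hP
    · simpa [sub_mul] using (le_iff.mp (hB i)).trace_mul_nonneg hP
  choose c hc using htrace
  refine ⟨of fun a b => c (single b a 1), tendsto_pi_nhds.mpr fun a => tendsto_pi_nhds.mpr
    fun b => ?_⟩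
  simpa [trace_mul_single] using hc (single b a 1)

end Matrix

namespace QCPM

variable {n m : ℕ}

lemma isCompletelyPositive_zero :
    IsCompletelyPositive (fun _ : Matrix (Fin n) (Fin n) ℂ => (0 : Matrix (Fin m) (Fin m) ℂ)) :=
  fun _ _ _ _ => PosSemidef.zero

lemma IsCompletelyPositive.add {F G : Matrix (Fin n) (Fin n) ℂ → Matrix (Fin m) (Fin m) ℂ}
    (hF : IsCompletelyPositive F) (hG : IsCompletelyPositive G) :
    IsCompletelyPositive (fun M => F M + G M) :=
  fun k hk M hM => (hF k hk M hM).add (hG k hk M hM)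

lemma IsCompletelyPositive.posSemidef_apply
    {F : Matrix (Fin n) (Fin n) ℂ → Matrix (Fin m) (Fin m) ℂ}
    (hF : IsCompletelyPositive F) {P : Matrix (Fin n) (Fin n) ℂ} (hP : P.PosSemidef) :
    (F P).PosSemidef := by
  have h := (hF 1 le_rfl _ (hP.submatrix fun r : Fin (n * 1) => (finProdFinEquiv.symm r).1))
    |>.submatrix fun a : Fin m => finProdFinEquiv (a, 0)
  convert h using 1
  ext a b
  simp only [tensorId, submatrix_apply, Equiv.symm_apply_apply]

lemma loewner_refl (f : Matrix (Fin n) (Fin n) ℂ → Matrix (Fin m) (Fin m) ℂ) : Loewner f f := by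
  simpa [Loewner] using isCompletelyPositive_zero

lemma loewner_trans {f g h : Matrix (Fin n) (Fin n) ℂ → Matrix (Fin m) (Fin m) ℂ}
    (hfg : Loewner f g) (hgh : Loewner g h) : Loewner f h := by
  simpa [Loewner] using hfg.add hgh

lemma loewner_zero_left_iff {f : Matrix (Fin n) (Fin n) ℂ → Matrix (Fin m) (Fin m) ℂ} :
    Loewner (fun _ => 0) f ↔ IsCompletelyPositive f := by
  simp [Loewner]

lemma continuous_tensorId (k : ℕ) (M : Matrix (Fin (n * k)) (Fin (n * k)) ℂ) :
    Continuous fun F : Matrix (Fin n) (Fin n) ℂ → Matrix (Fin m) (Fin m) ℂ => tensorId F k M := by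
  unfold tensorId
  fun_prop

lemma isClosed_setOf_isCompletelyPositive :
    IsClosed {F : Matrix (Fin n) (Fin n) ℂ → Matrix (Fin m) (Fin m) ℂ |
      IsCompletelyPositive F} := by
  simp only [IsCompletelyPositive, Set.ofPred_forall]
  exact isClosed_iInter fun k => isClosed_iInter fun _ => isClosed_iInter fun M =>
    isClosed_iInter fun _ => isClosed_setOf_posSemidef.preimage (continuous_tensorId k M)

lemma isClosed_setOf_loewner_left (f : Matrix (Fin n) (Fin n) ℂ → Matrix (Fin m) (Fin m) ℂ) :
    IsClosed {g | Loewner f g} :=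
  isClosed_setOf_isCompletelyPositive.preimage (continuous_id.sub continuous_const)

lemma isClosed_setOf_loewner_right (g : Matrix (Fin n) (Fin n) ℂ → Matrix (Fin m) (Fin m) ℂ) :
    IsClosed {f | Loewner f g} :=
  isClosed_setOf_isCompletelyPositive.preimage (continuous_const.sub continuous_id)

lemma continuous_groupAct (H : Subgroup (Equiv.Perm (Fin m))) : Continuous (groupAct m H) := by
  have := Fintype.ofFinite H
  unfold groupAct permAct
  simp only [finsum_eq_sum_of_fintype]
  fun_prop

lemma isClosed_cpms (G : Subgroup (Equiv.Perm (Fin n))) (H : Subgroup (Equiv.Perm (Fin m))) :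
    IsClosed (cpms G H) := by
  have hlin : {f : Matrix (Fin n) (Fin n) ℂ → Matrix (Fin m) (Fin m) ℂ | IsLinearMap ℂ f}
      = Set.range ((↑) : (Matrix (Fin n) (Fin n) ℂ →ₗ[ℂ] Matrix (Fin m) (Fin m) ℂ) → _) :=
    Set.ext fun f => ⟨fun hf => ⟨hf.mk' f, rfl⟩, by rintro ⟨F, rfl⟩; exact F.isLinear⟩
  simp only [cpms, Set.ofPred_and, hlin]
  refine (LinearMap.isClosed_range_coe _ _ _).inter
    (isClosed_setOf_isCompletelyPositive.inter (isClosed_eq ?_ continuous_id))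
  exact continuous_pi fun M => (continuous_groupAct H).comp (continuous_apply _)

lemma exists_tendsto_of_loewner_monotone_of_le {ι : Type*} [Preorder ι]
    {F : ι → Matrix (Fin n) (Fin n) ℂ → Matrix (Fin m) (Fin m) ℂ}
    (hlin : ∀ i, IsLinearMap ℂ (F i)) (hmono : ∀ ⦃i j⦄, i ≤ j → Loewner (F i) (F j))
    {b : Matrix (Fin n) (Fin n) ℂ → Matrix (Fin m) (Fin m) ℂ} (hb : ∀ i, Loewner (F i) b) :
    ∃ s, Tendsto F atTop (𝓝 s) := by
  have hpsd (P : Matrix (Fin n) (Fin n) ℂ) (hP : P.PosSemidef) :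
      ∃ L, Tendsto (F · P) atTop (𝓝 L) :=
    open scoped MatrixOrder in
    exists_tendsto_of_monotone_of_le (fun i j hij => (hmono hij).posSemidef_apply hP)
      fun i => (hb i).posSemidef_apply hP
  choose s hs using exists_tendsto_of_forall_mem_span (fun i => (hlin i).mk' (F i))
    span_setOf_posSemidef hpsd
  exact ⟨s, tendsto_pi_nhds.mpr hs⟩

lemma zero_mem_cpms (G : Subgroup (Equiv.Perm (Fin n))) (H : Subgroup (Equiv.Perm (Fin m))) :
    (fun _ => 0) ∈ cpms G H := by
  refine ⟨⟨fun _ _ => by simp, fun _ _ => by simp⟩, isCompletelyPositive_zero, ?_⟩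
  funext M
  simp [groupAct, permAct]

/-- With the Löwner order, `cpms(G,H)` is a bounded directed-complete
partial order: the zero map is its minimum element, and every directed subset of
`cpms(G,H)` that has an upper bound in `cpms(G,H)` has a least upper bound in
`cpms(G,H)`. -/
theorem cpms_bounded_dcpo (n m : ℕ) (G : Subgroup (Equiv.Perm (Fin n)))
    (H : Subgroup (Equiv.Perm (Fin m))) :
    ((fun _ => 0) ∈ cpms G H) ∧
    (∀ f ∈ cpms G H, Loewner (fun _ => 0) f) ∧
    (∀ D : Set (Matrix (Fin n) (Fin n) ℂ → Matrix (Fin m) (Fin m) ℂ),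
      D ⊆ cpms G H → D.Nonempty →
      (∀ f ∈ D, ∀ g ∈ D, ∃ h ∈ D, Loewner f h ∧ Loewner g h) →
      (∃ b ∈ cpms G H, ∀ f ∈ D, Loewner f b) →
      ∃ s ∈ cpms G H, (∀ f ∈ D, Loewner f s) ∧
        ∀ u ∈ cpms G H, (∀ f ∈ D, Loewner f u) → Loewner s u) := by
  refine ⟨zero_mem_cpms G H, fun f hf => loewner_zero_left_iff.mpr hf.2.1, ?_⟩
  rintro D hD ⟨f₀, hf₀⟩ hdir ⟨b, -, hbD⟩
  let : Preorder D :=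
    { le := fun f g => Loewner f.1 g.1
      le_refl := fun f => loewner_refl f.1
      le_trans := fun _ _ _ => loewner_trans }
  have : Nonempty D := ⟨⟨f₀, hf₀⟩⟩
  have : IsDirected D (· ≤ ·) := ⟨fun f g => by
    obtain ⟨h, hh, hfh, hgh⟩ := hdir f.1 f.2 g.1 g.2
    exact ⟨⟨h, hh⟩, hfh, hgh⟩⟩
  obtain ⟨s, hs⟩ := exists_tendsto_of_loewner_monotone_of_le (F := Subtype.val)
    (fun f => (hD f.2).1) (fun _ _ h => h) (fun f => hbD f.1 f.2)
  refine ⟨s, (isClosed_cpms G H).mem_of_tendsto hs (.of_forall fun f => hD f.2),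
    fun f hf => (isClosed_setOf_loewner_left f).mem_of_tendsto hs ?_,
    fun u _ hu => (isClosed_setOf_loewner_right u).mem_of_tendsto hs
      (.of_forall fun g => hu g.1 g.2)⟩
  filter_upwards [eventually_ge_atTop ⟨f, hf⟩] with g hg using hg

end QCPM
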